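/- arXiv:1905.00850 — 4 statements merged into one kernel-verified Lean document; each statement's English description precedes it below -/
import Mathlib

section
/- Let {u, v} be a non-tree edge of G with dep(u) ≥ dep(v), and let w be the LCA of (u, v). Then there is a simple cycle in G of length dep(u) + dep(v) − 2·dep(w) + 1 (in particular of length at most 2·dep(p) + 1) that contains the edges {u, v} and {u, p(u)}; moreover, if v ≠ w, it also contains the edge {v, p(v)}. -/
open Function

/-- `u` is an ancestor of `v` in the rooted forest given by parent pointers `p`. -/
def IsAncestor {V : Type} (p : V → V) (u v : V) : Prop := ∃ i : ℕ, p^[i] v = u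

/-- The depth of `v`: the least `i` with `p^[i+1] v = p^[i] v`. -/
noncomputable def dep {V : Type} (p : V → V) (v : V) : ℕ :=
  sInf {i : ℕ | p^[i + 1] v = p^[i] v}

/-- The depth of the rooted tree `p`. -/
noncomputable def treeDep {V : Type} [Fintype V] (p : V → V) : ℕ :=
  Finset.univ.sup (dep p)

/-- `w` is the lowest common ancestor of `(u, v)`: a common ancestor of maximal depth. -/
def IsLCA {V : Type} (p : V → V) (u v w : V) : Prop :=
  IsAncestor p w u ∧ IsAncestor p w v ∧
    ∀ x, IsAncestor p x u → IsAncestor p x v → dep p x ≤ dep p w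

/-!
The cycle closes the edge `{u, v}` with the two tree paths from `u` and from `v` up to `w`.
Depth drops by exactly one along a parent pointer, so each tree path is a path; a vertex on both
is a common ancestor of depth at least `dep w`, hence equal to `w` by maximality of the LCA.
Every edge of the tree paths has the form `{x, p x}`, which `{u, v}` is not. Finally `w ≠ u`,
since otherwise `dep v ≤ dep u` would force `v = w = u`, so the path from `u` starts with
`{u, p u}`.
-/

def IsParentPointers {V : Type} (p : V → V) : Prop := ∀ v, ∃ i : ℕ, p^[i + 1] v = p^[i] v

section ParentPointers

variable {V : Type} {p : V → V}

lemma IsParentPointers.isFixedPt_iterate_dep (hP : IsParentPointers p) (v : V) :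
    IsFixedPt p (p^[dep p v] v) := by
  have h : p^[dep p v + 1] v = p^[dep p v] v := Nat.sInf_mem (hP v)
  rwa [iterate_succ_apply'] at h

lemma IsParentPointers.iterate_eq_iterate_dep (hP : IsParentPointers p) {v : V} {i : ℕ}
    (hi : dep p v ≤ i) : p^[i] v = p^[dep p v] v := by
  rw [← Nat.sub_add_cancel hi, iterate_add_apply]
  exact (hP.isFixedPt_iterate_dep v).iterate _

lemma IsParentPointers.dep_le_iff (hP : IsParentPointers p) {v : V} {i : ℕ} :
    dep p v ≤ i ↔ p^[i + 1] v = p^[i] v := by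
  refine ⟨fun hi => ?_, fun h => Nat.sInf_le h⟩
  rw [hP.iterate_eq_iterate_dep hi, hP.iterate_eq_iterate_dep (by omega)]

lemma iterate_succ_ne_of_lt_dep {v : V} {i : ℕ} (hi : i < dep p v) :
    p^[i + 1] v ≠ p^[i] v :=
  fun h => (Nat.sInf_le h).not_gt hi

-- Truncated subtraction makes this hold also for `i > dep p v`, where `p^[i] v` is the root.
lemma IsParentPointers.dep_iterate (hP : IsParentPointers p) (v : V) (i : ℕ) :
    dep p (p^[i] v) = dep p v - i := by
  refine eq_of_forall_ge_iff fun k => ?_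
  rw [hP.dep_le_iff, ← iterate_add_apply, ← iterate_add_apply, add_right_comm,
    ← hP.dep_le_iff, Nat.sub_le_iff_le_add]

lemma IsParentPointers.iterate_injOn (hP : IsParentPointers p) {v : V} {i j : ℕ}
    (hi : i ≤ dep p v) (hj : j ≤ dep p v) (h : p^[i] v = p^[j] v) : i = j := by
  have := congrArg (dep p) h
  rw [hP.dep_iterate, hP.dep_iterate] at this
  omega

lemma IsAncestor.dep_le (hP : IsParentPointers p) {w v : V} (h : IsAncestor p w v) :
    dep p w ≤ dep p v := by
  obtain ⟨i, rfl⟩ := h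
  rw [hP.dep_iterate]
  omega

lemma IsAncestor.iterate_dep_sub_dep (hP : IsParentPointers p) {w v : V}
    (h : IsAncestor p w v) : p^[dep p v - dep p w] v = w := by
  obtain ⟨i, rfl⟩ := h
  rw [hP.dep_iterate]
  rcases le_total i (dep p v) with hi | hi
  · rw [Nat.sub_sub_self hi]
  · rw [Nat.sub_eq_zero_of_le hi, Nat.sub_zero, hP.iterate_eq_iterate_dep hi]

lemma IsAncestor.eq_of_dep_eq (hP : IsParentPointers p) {x y v : V} (hx : IsAncestor p x v)
    (hy : IsAncestor p y v) (h : dep p x = dep p y) : x = y := by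
  rw [← hx.iterate_dep_sub_dep hP, ← hy.iterate_dep_sub_dep hP, h]

lemma dep_le_treeDep [Fintype V] (v : V) : dep p v ≤ treeDep p :=
  Finset.le_sup (Finset.mem_univ v)

end ParentPointers

namespace SimpleGraph

variable {V : Type} {G : SimpleGraph V}

def iterateWalk (G : SimpleGraph V) (f : V → V) (v : V) :
    (n : ℕ) → (∀ i < n, G.Adj (f^[i] v) (f^[i + 1] v)) → G.Walk v (f^[n] v)
  | 0, _ => Walk.nil
  | n + 1, h => (G.iterateWalk f v n fun i hi => h i (by omega)).concat (h n (by omega))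

variable {f : V → V} {v : V}

lemma support_iterateWalk (n : ℕ) (h : ∀ i < n, G.Adj (f^[i] v) (f^[i + 1] v)) :
    (G.iterateWalk f v n h).support = (List.range (n + 1)).map (f^[·] v) := by
  induction n with
  | zero => rfl
  | succ n ih =>
    rw [iterateWalk, Walk.support_concat, ih, List.range_succ (n := n + 1), List.map_append]
    rfl

lemma edges_iterateWalk (n : ℕ) (h : ∀ i < n, G.Adj (f^[i] v) (f^[i + 1] v)) :
    (G.iterateWalk f v n h).edges = (List.range n).map fun i => s(f^[i] v, f^[i + 1] v) := by
  induction n with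
  | zero => rfl
  | succ n ih =>
    rw [iterateWalk, Walk.edges_concat, ih, List.range_succ, List.map_append,
      List.concat_eq_append]
    rfl

lemma length_iterateWalk (n : ℕ) (h : ∀ i < n, G.Adj (f^[i] v) (f^[i + 1] v)) :
    (G.iterateWalk f v n h).length = n := by
  induction n with
  | zero => rfl
  | succ n ih => rw [iterateWalk, Walk.length_concat, ih]

lemma isPath_iterateWalk (n : ℕ) (h : ∀ i < n, G.Adj (f^[i] v) (f^[i + 1] v))
    (hinj : ∀ i ≤ n, ∀ j ≤ n, f^[i] v = f^[j] v → i = j) :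
    (G.iterateWalk f v n h).IsPath := by
  rw [Walk.isPath_def, support_iterateWalk]
  refine List.nodup_range.map_on fun i hi j hj => hinj i ?_ j ?_ <;>
    simp only [List.mem_range] at hi hj <;> omega

lemma Walk.isPath_append_of_support_inter {u v w : V} {p : G.Walk u v} {q : G.Walk v w}
    (hp : p.IsPath) (hq : q.IsPath) (h : ∀ x ∈ p.support, x ∈ q.support → x = v) :
    (p.append q).IsPath := by
  rw [Walk.isPath_def, Walk.support_append, List.nodup_append']
  have hq' := hq.support_nodup
  rw [← q.cons_tail_support, List.nodup_cons] at hq'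
  exact ⟨hp.support_nodup, hq'.2,
    fun x hxp hxq => hq'.1 (h x hxp (List.mem_of_mem_tail hxq) ▸ hxq)⟩

end SimpleGraph

open SimpleGraph

section AncestorWalk

variable {V : Type} {G : SimpleGraph V} {p : V → V} {r : V}

lemma adj_iterate_succ_of_lt_dep (hr : p r = r) (hspan : ∀ v, v ≠ r → G.Adj v (p v)) {v : V}
    {i : ℕ} (hi : i < dep p v) : G.Adj (p^[i] v) (p^[i + 1] v) := by
  rw [iterate_succ_apply']
  refine hspan _ fun h => iterate_succ_ne_of_lt_dep hi ?_
  rw [iterate_succ_apply', h, hr]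

noncomputable def ancestorWalk (hP : IsParentPointers p) (hr : p r = r)
    (hspan : ∀ v, v ≠ r → G.Adj v (p v)) {v w : V} (h : IsAncestor p w v) : G.Walk v w :=
  (G.iterateWalk p v (dep p v - dep p w) fun _ hi =>
    adj_iterate_succ_of_lt_dep hr hspan (by omega)).copy rfl (h.iterate_dep_sub_dep hP)

variable (hP : IsParentPointers p) (hr : p r = r) (hspan : ∀ v, v ≠ r → G.Adj v (p v))
  {v w : V} (h : IsAncestor p w v)

lemma length_ancestorWalk : (ancestorWalk hP hr hspan h).length = dep p v - dep p w := by
  rw [ancestorWalk, Walk.length_copy, length_iterateWalk]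

lemma isPath_ancestorWalk : (ancestorWalk hP hr hspan h).IsPath := by
  rw [ancestorWalk, Walk.isPath_copy]
  have := h.dep_le hP
  exact isPath_iterateWalk _ _ fun i hi j hj => hP.iterate_injOn (by omega) (by omega)

lemma mem_support_ancestorWalk {x : V} (hx : x ∈ (ancestorWalk hP hr hspan h).support) :
    IsAncestor p x v ∧ dep p w ≤ dep p x := by
  rw [ancestorWalk, Walk.support_copy, support_iterateWalk, List.mem_map] at hx
  obtain ⟨i, hi, rfl⟩ := hx
  rw [List.mem_range] at hi
  refine ⟨⟨i, rfl⟩, ?_⟩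
  have := h.dep_le hP
  rw [hP.dep_iterate]
  omega

lemma exists_eq_of_mem_edges_ancestorWalk {e : Sym2 V}
    (he : e ∈ (ancestorWalk hP hr hspan h).edges) : ∃ x, e = s(x, p x) := by
  rw [ancestorWalk, Walk.edges_copy, edges_iterateWalk, List.mem_map] at he
  obtain ⟨i, -, rfl⟩ := he
  exact ⟨p^[i] v, by rw [iterate_succ_apply']⟩

lemma mem_edges_ancestorWalk (hne : w ≠ v) :
    s(v, p v) ∈ (ancestorWalk hP hr hspan h).edges := by
  rw [ancestorWalk, Walk.edges_copy, edges_iterateWalk, List.mem_map]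
  refine ⟨0, List.mem_range.mpr (Nat.pos_of_ne_zero fun h0 => hne ?_), rfl⟩
  rw [← h.iterate_dep_sub_dep hP, h0, iterate_zero_apply]

end AncestorWalk

section FundamentalCycle

variable {V : Type} {G : SimpleGraph V} {p : V → V} {r : V} {u v w : V}

lemma IsLCA.ne_left_of_dep_le (hP : IsParentPointers p) (hlca : IsLCA p u v w)
    (hdep : dep p v ≤ dep p u) (huv : u ≠ v) : w ≠ u := by
  rintro rfl
  have hvw : v = w := IsAncestor.eq_of_dep_eq hP ⟨0, rfl⟩ hlca.2.1
    (le_antisymm (hlca.2.1.dep_le hP) hdep).symm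
  exact huv hvw.symm

lemma IsLCA.eq_of_mem_support_ancestorWalk (hP : IsParentPointers p) (hr : p r = r)
    (hspan : ∀ v, v ≠ r → G.Adj v (p v)) (hlca : IsLCA p u v w) {x : V}
    (hxu : x ∈ (ancestorWalk hP hr hspan hlca.1).support)
    (hxv : x ∈ (ancestorWalk hP hr hspan hlca.2.1).support) : x = w := by
  obtain ⟨hxu, hwx⟩ := mem_support_ancestorWalk hP hr hspan hlca.1 hxu
  obtain ⟨hxv, -⟩ := mem_support_ancestorWalk hP hr hspan hlca.2.1 hxv
  exact hxu.eq_of_dep_eq hP hlca.1 (le_antisymm (hlca.2.2 x hxu hxv) hwx)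

noncomputable def fundamentalCycle (hP : IsParentPointers p) (hr : p r = r)
    (hspan : ∀ v, v ≠ r → G.Adj v (p v)) (hlca : IsLCA p u v w) (huv : G.Adj u v) :
    G.Walk u u :=
  .cons huv ((ancestorWalk hP hr hspan hlca.2.1).append (ancestorWalk hP hr hspan hlca.1).reverse)

variable (hP : IsParentPointers p) (hr : p r = r) (hspan : ∀ v, v ≠ r → G.Adj v (p v))
  (hlca : IsLCA p u v w) (huv : G.Adj u v)

lemma isCycle_fundamentalCycle (hnt₁ : p u ≠ v) (hnt₂ : p v ≠ u) :
    (fundamentalCycle hP hr hspan hlca huv).IsCycle := by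
  refine (Walk.cons_isCycle_iff _ huv).mpr ⟨?_, fun he => ?_⟩
  · refine Walk.isPath_append_of_support_inter (isPath_ancestorWalk ..)
      (isPath_ancestorWalk ..).reverse fun x hxv hxu => ?_
    rw [Walk.support_reverse, List.mem_reverse] at hxu
    exact hlca.eq_of_mem_support_ancestorWalk hP hr hspan hxu hxv
  · rw [Walk.edges_append, Walk.edges_reverse, List.mem_append, List.mem_reverse] at he
    obtain ⟨x, hx⟩ := he.elim (exists_eq_of_mem_edges_ancestorWalk _ _ _ _)
      (exists_eq_of_mem_edges_ancestorWalk _ _ _ _)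
    rcases Sym2.eq_iff.mp hx with ⟨rfl, rfl⟩ | ⟨rfl, rfl⟩
    exacts [hnt₁ rfl, hnt₂ rfl]

lemma length_fundamentalCycle :
    (fundamentalCycle hP hr hspan hlca huv).length = dep p u + dep p v - 2 * dep p w + 1 := by
  have := hlca.1.dep_le hP
  have := hlca.2.1.dep_le hP
  rw [fundamentalCycle, Walk.length_cons, Walk.length_append, Walk.length_reverse,
    length_ancestorWalk, length_ancestorWalk]
  omega

lemma mem_edges_fundamentalCycle_left (hdep : dep p v ≤ dep p u) :
    s(u, p u) ∈ (fundamentalCycle hP hr hspan hlca huv).edges := by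
  rw [fundamentalCycle, Walk.edges_cons, Walk.edges_append, Walk.edges_reverse]
  exact List.mem_cons_of_mem _ <| List.mem_append_right _ <| List.mem_reverse.mpr <|
    mem_edges_ancestorWalk hP hr hspan hlca.1 (hlca.ne_left_of_dep_le hP hdep huv.ne)

lemma mem_edges_fundamentalCycle_right (hvw : v ≠ w) :
    s(v, p v) ∈ (fundamentalCycle hP hr hspan hlca huv).edges := by
  rw [fundamentalCycle, Walk.edges_cons, Walk.edges_append]
  exact List.mem_cons_of_mem _ <| List.mem_append_left _ <|
    mem_edges_ancestorWalk hP hr hspan hlca.2.1 hvw.symm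

end FundamentalCycle

theorem stmt4_general {V : Type} [Fintype V]
    (G : SimpleGraph V) (p : V → V) (r : V)
    (hstab : ∀ v : V, ∃ i : ℕ, p^[i + 1] v = p^[i] v)
    (hr : p r = r)
    (hspan : ∀ v : V, v ≠ r → G.Adj v (p v))
    (u v w : V) (huv : G.Adj u v) (hnt1 : p u ≠ v) (hnt2 : p v ≠ u)
    (hdep : dep p v ≤ dep p u) (hlca : IsLCA p u v w) :
    ∃ (x : V) (c : G.Walk x x), c.IsCycle ∧
      c.length = dep p u + dep p v - 2 * dep p w + 1 ∧
      c.length ≤ 2 * treeDep p + 1 ∧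
      s(u, v) ∈ c.edges ∧ s(u, p u) ∈ c.edges ∧
      (v ≠ w → s(v, p v) ∈ c.edges) := by
  have hP : IsParentPointers p := hstab
  have hlen := length_fundamentalCycle hP hr hspan hlca huv
  refine ⟨u, fundamentalCycle hP hr hspan hlca huv, isCycle_fundamentalCycle hP hr hspan hlca huv
    hnt1 hnt2, hlen, ?_, by simp [fundamentalCycle],
    mem_edges_fundamentalCycle_left hP hr hspan hlca huv hdep,
    mem_edges_fundamentalCycle_right hP hr hspan hlca huv⟩
  have := dep_le_treeDep (p := p) u
  have := dep_le_treeDep (p := p) v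
  omega

theorem stmt4 {V : Type} [Fintype V] [DecidableEq V]
    (G : SimpleGraph V) (p : V → V) (r : V)
    (hG : G.Connected) (hcard : 2 ≤ Fintype.card V)
    (hstab : ∀ v : V, ∃ i : ℕ, p^[i + 1] v = p^[i] v)
    (hr : p r = r) (hroot : ∀ v : V, p v = v → v = r)
    (hspan : ∀ v : V, v ≠ r → G.Adj v (p v))
    (u v w : V) (huv : G.Adj u v) (hnt1 : p u ≠ v) (hnt2 : p v ≠ u)
    (hdep : dep p v ≤ dep p u) (hlca : IsLCA p u v w) :
    ∃ (x : V) (c : G.Walk x x), c.IsCycle ∧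
      c.length = dep p u + dep p v - 2 * dep p w + 1 ∧
      c.length ≤ 2 * treeDep p + 1 ∧
      s(u, v) ∈ c.edges ∧ s(u, p u) ∈ c.edges ∧
      (v ≠ w → s(v, p v) ∈ c.edges) :=
  stmt4_general G p r hstab hr hspan u v w huv hnt1 hnt2 hdep hlca
end

section
/- Let G be a simple graph and let D' ∈ ℕ be such that whenever two vertices of G lie on a common simple cycle, they lie on a common simple cycle of length at most D'. If e1 and e2 are edges of G contained in a common simple cycle, then e1 and e2 are contained in a common simple cycle of length at most 3·D'. -/
/-!
Let `C` be a cycle through a vertex `a`, let `ab` be an edge, and let `T` be a path from `b` to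
`C` avoiding `a`. Following `T` from `b` until it first meets `C` and returning to `a` along the
arc of `C` that contains a prescribed edge `f` of `C` closes a cycle through `ab` and `f` of length
at most `|T| + |C|`.

Applying this twice gives the bound. A vertex `u` and an edge `xy` on a common cycle lie on a
cycle of length at most `2D'`: close an ear on the short cycle through `u` and `x`, with `T` inside
the short cycle through `u` and `y`. For edges `ab` and `e₂`, close an ear on such a cycle through
`a` and `e₂`, with `T` inside the short cycle through `b` and an endpoint `c ≠ a` of `e₂`.
-/

namespace SimpleGraph

variable {V : Type*} {G : SimpleGraph V}

def HasShortCommonCycles (G : SimpleGraph V) (k : ℕ) : Prop :=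
  ∀ u w : V, (∃ (x : V) (c : G.Walk x x), c.IsCycle ∧ u ∈ c.support ∧ w ∈ c.support) →
    ∃ (x : V) (c : G.Walk x x), c.IsCycle ∧ u ∈ c.support ∧ w ∈ c.support ∧ c.length ≤ k

theorem exists_mem_ne_of_mem_edgeSet {e : Sym2 V} (he : e ∈ G.edgeSet) (a : V) :
    ∃ c ∈ e, c ≠ a := by
  obtain ⟨x, y⟩ := e
  by_cases hx : x = a
  · exact ⟨y, Sym2.mem_mk_right x y, hx ▸ (G.ne_of_adj he).symm⟩
  · exact ⟨x, Sym2.mem_mk_left x y, hx⟩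

namespace Walk

variable {u v w a b c x : V} {C : G.Walk w w}

theorem IsPath.append {p : G.Walk u v} {q : G.Walk v w} (hp : p.IsPath) (hq : q.IsPath)
    (h : ∀ x ∈ p.support, x ∈ q.support → x = v) : (p.append q).IsPath := by
  have hq' := hq.support_nodup
  rw [← cons_tail_support q, List.nodup_cons] at hq'
  rw [isPath_def, support_append, List.nodup_append]
  refine ⟨hp.support_nodup, hq'.2, fun x hxp y hyq hxy => hq'.1 ?_⟩
  subst hxy
  exact h x hxp (List.mem_of_mem_tail hyq) ▸ hyq

theorem IsPath.exists_isPath_first_mem (S : Set V) {T : G.Walk u v} (hT : T.IsPath)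
    (hv : v ∈ S) :
    ∃ (z : V) (W : G.Walk u z), W.IsPath ∧ z ∈ S ∧ (∀ x ∈ W.support, x ∈ S → x = z) ∧
      W.support ⊆ T.support ∧ W.length ≤ T.length := by
  induction T with
  | nil => exact ⟨_, Walk.nil, by simp, hv, by simp, by simp, by simp⟩
  | @cons u y v hadj T ih =>
    by_cases hu : u ∈ S
    · exact ⟨u, Walk.nil, by simp, hu, by simp, by simp, by simp⟩
    rw [cons_isPath_iff] at hT
    obtain ⟨z, W, hW, hzS, hWfirst, hWT, hWlen⟩ := ih hT.1 hv
    refine ⟨z, cons hadj W, ?_, hzS, ?_, ?_, by simp [hWlen]⟩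
    · exact (cons_isPath_iff _ _).mpr ⟨hW, fun h => hT.2 (hWT h)⟩
    · intro x hx hxS
      rw [support_cons, List.mem_cons] at hx
      rcases hx with rfl | hx
      · exact absurd hxS hu
      · exact hWfirst x hx hxS
    · simpa using List.subset_cons_of_subset u hWT

theorem IsCycle.eq_or_eq_of_mem_support_append {p : G.Walk a b} {q : G.Walk b a}
    (h : (p.append q).IsCycle) (hxp : x ∈ p.support) (hxq : x ∈ q.support) : x = a ∨ x = b := by
  have hnodup := h.support_nodup
  rw [tail_support_append, List.nodup_append] at hnodup
  rw [← cons_tail_support p, List.mem_cons] at hxp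
  rw [← cons_tail_support q, List.mem_cons] at hxq
  rcases hxp with hxa | hxp
  · exact .inl hxa
  rcases hxq with hxb | hxq
  · exact .inr hxb
  exact absurd rfl (hnodup.2.2 x hxp x hxq)

theorem IsCycle.exists_isCycle_append (hC : C.IsCycle) (ha : a ∈ C.support)
    (hb : b ∈ C.support) :
    ∃ (p : G.Walk a b) (q : G.Walk b a), (p.append q).IsCycle ∧
      (∀ x, x ∈ (p.append q).support ↔ x ∈ C.support) ∧
      (∀ e, e ∈ (p.append q).edges ↔ e ∈ C.edges) ∧ (p.append q).length = C.length := by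
  classical
  have hb' : b ∈ (C.rotate a ha).support := (C.mem_support_rotate_iff a ha).mpr hb
  refine ⟨_, _, (C.rotate a ha).take_spec hb' ▸ hC.rotate ha, fun x => ?_, fun e => ?_, ?_⟩
  · rw [take_spec, mem_support_rotate_iff]
  · rw [take_spec, (rotate_edges C a ha).perm.mem_iff]
  · rw [take_spec, length_rotate]

theorem IsCycle.exists_isPath_notMem_support (hC : C.IsCycle) (ha : a ∈ C.support)
    (hb : b ∈ C.support) (hxa : x ≠ a) (hxb : x ≠ b) :
    ∃ T : G.Walk a b, T.IsPath ∧ x ∉ T.support ∧ T.length ≤ C.length := by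
  by_cases hab : a = b
  · subst hab
    exact ⟨Walk.nil, by simp, by simpa using hxa, by simp⟩
  obtain ⟨p, q, hpq, -, -, hlen⟩ := hC.exists_isCycle_append ha hb
  rw [length_append] at hlen
  by_cases hxp : x ∈ p.support
  · have hxq : x ∉ q.support := fun hxq =>
      (hpq.eq_or_eq_of_mem_support_append hxp hxq).elim hxa hxb
    refine ⟨q.reverse, (hpq.isPath_of_append_right (not_nil_of_ne hab)).reverse, ?_, ?_⟩
    · simpa using hxq
    · simp only [length_reverse]; omega
  · exact ⟨p, hpq.isPath_of_append_left (not_nil_of_ne (Ne.symm hab)), hxp, by omega⟩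

theorem IsCycle.exists_isPath_mem_edges (hC : C.IsCycle) (ha : a ∈ C.support)
    (hb : b ∈ C.support) (hab : a ≠ b) {f : Sym2 V} (hf : f ∈ C.edges) :
    ∃ M : G.Walk a b, M.IsPath ∧ f ∈ M.edges ∧ M.support ⊆ C.support ∧ M.edges ⊆ C.edges ∧
      M.length < C.length := by
  obtain ⟨p, q, hpq, hsupp, hedges, hlen⟩ := hC.exists_isCycle_append ha hb
  have hp := hpq.isPath_of_append_left (not_nil_of_ne (Ne.symm hab))
  have hq := hpq.isPath_of_append_right (not_nil_of_ne hab)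
  have hp0 : 0 < p.length := not_nil_iff_lt_length.mp (not_nil_of_ne hab)
  have hq0 : 0 < q.length := not_nil_iff_lt_length.mp (not_nil_of_ne (Ne.symm hab))
  simp only [mem_support_append_iff, edges_append, List.mem_append] at hsupp hedges
  rw [length_append] at hlen
  rcases (hedges f).mpr hf with hfp | hfq
  · exact ⟨p, hp, hfp, fun x hx => (hsupp x).mp (.inl hx), fun e he => (hedges e).mp (.inl he),
      by omega⟩
  · refine ⟨q.reverse, hq.reverse, by simpa using hfq, fun x hx => (hsupp x).mp (.inr ?_),
      fun e he => (hedges e).mp (.inr ?_), by simp only [length_reverse]; omega⟩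
    · simpa using hx
    · simpa using he

theorem IsCycle.exists_isCycle_mem_edges_of_ear (hC : C.IsCycle) (ha : a ∈ C.support)
    (hab : G.Adj a b) {T : G.Walk b c} (hT : T.IsPath) (hc : c ∈ C.support)
    (haT : a ∉ T.support) {f : Sym2 V} (hf : f ∈ C.edges) :
    ∃ (z : V) (D : G.Walk z z), D.IsCycle ∧ s(a, b) ∈ D.edges ∧ f ∈ D.edges ∧
      D.length ≤ T.length + C.length := by
  by_cases habC : s(a, b) ∈ C.edges
  · exact ⟨w, C, hC, habC, hf, by omega⟩
  obtain ⟨z, W, hW, hzC, hWfirst, hWT, hWlen⟩ := hT.exists_isPath_first_mem {x | x ∈ C.support} hc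
  have haW : a ∉ W.support := fun h => haT (hWT h)
  have hza : z ≠ a := by rintro rfl; exact haW W.end_mem_support
  obtain ⟨M, hM, hfM, hMC, hMe, hMlen⟩ := hC.exists_isPath_mem_edges hzC ha hza hf
  refine ⟨a, cons hab (W.append M), ?_, by simp, by simp [hfM], ?_⟩
  · rw [cons_isCycle_iff, edges_append, List.mem_append, not_or]
    exact ⟨hW.append hM fun x hxW hxM => hWfirst x hxW (hMC hxM),
      fun h => haW (W.fst_mem_support_of_mem_edges h), fun h => habC (hMe h)⟩
  · simp only [length_cons, length_append]; omega

theorem IsCycle.exists_isCycle_mem_support_of_ear (hC : C.IsCycle) (ha : a ∈ C.support)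
    (hab : G.Adj a b) {T : G.Walk b c} (hT : T.IsPath) (hc : c ∈ C.support)
    (haT : a ∉ T.support) (hu : u ∈ C.support) :
    ∃ (z : V) (D : G.Walk z z), D.IsCycle ∧ s(a, b) ∈ D.edges ∧ u ∈ D.support ∧
      D.length ≤ T.length + C.length := by
  obtain ⟨f, hf, huf⟩ := (mem_support_iff_exists_mem_edges_of_not_nil hC.not_nil).mp hu
  obtain ⟨z, D, hD, habD, hfD, hlen⟩ := hC.exists_isCycle_mem_edges_of_ear ha hab hT hc haT hf
  exact ⟨z, D, hD, habD, mem_support_of_mem_edges hfD huf, hlen⟩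

end Walk

open Walk

theorem HasShortCommonCycles.exists_isCycle_mem_support_mem_edges {k : ℕ}
    (hG : G.HasShortCommonCycles k) {w u : V} {C : G.Walk w w} (hC : C.IsCycle)
    (hu : u ∈ C.support) {e : Sym2 V} (he : e ∈ C.edges) :
    ∃ (z : V) (D : G.Walk z z), D.IsCycle ∧ u ∈ D.support ∧ e ∈ D.edges ∧ D.length ≤ 2 * k := by
  obtain ⟨x, y⟩ := e
  have hxy : G.Adj x y := C.adj_of_mem_edges he
  obtain ⟨_, C₁, hC₁, huC₁, hxC₁, hlen₁⟩ := hG u x ⟨w, C, hC, hu, C.fst_mem_support_of_mem_edges he⟩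
  obtain ⟨_, C₂, hC₂, huC₂, hyC₂, hlen₂⟩ := hG u y ⟨w, C, hC, hu, C.snd_mem_support_of_mem_edges he⟩
  by_cases hxC₂ : x ∈ C₂.support
  · obtain ⟨z, D, hD, hyxD, huD, hlen⟩ := hC₂.exists_isCycle_mem_support_of_ear hyC₂ hxy.symm
      (T := Walk.nil) (by simp) hxC₂ (by simpa using hxy.ne.symm) huC₂
    rw [Sym2.eq_swap] at hyxD
    exact ⟨z, D, hD, huD, hyxD, by rw [length_nil] at hlen; omega⟩
  · obtain ⟨T, hT, hxT, hTlen⟩ := hC₂.exists_isPath_notMem_support (x := x) hyC₂ huC₂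
      (by rintro rfl; exact hxC₂ hyC₂) (by rintro rfl; exact hxC₂ huC₂)
    obtain ⟨z, D, hD, hxyD, huD, hlen⟩ :=
      hC₁.exists_isCycle_mem_support_of_ear hxC₁ hxy hT huC₁ hxT huC₁
    exact ⟨z, D, hD, huD, hxyD, by omega⟩

end SimpleGraph

open SimpleGraph Walk

theorem stmt6 {V : Type} (G : SimpleGraph V) (D' : ℕ)
    (hD : ∀ u w : V,
      (∃ (x : V) (c : G.Walk x x), c.IsCycle ∧ u ∈ c.support ∧ w ∈ c.support) →
      ∃ (x : V) (c : G.Walk x x), c.IsCycle ∧ u ∈ c.support ∧ w ∈ c.support ∧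
        c.length ≤ D')
    (e1 e2 : Sym2 V)
    (h : ∃ (x : V) (c : G.Walk x x), c.IsCycle ∧ e1 ∈ c.edges ∧ e2 ∈ c.edges) :
    ∃ (x : V) (c : G.Walk x x), c.IsCycle ∧ e1 ∈ c.edges ∧ e2 ∈ c.edges ∧
      c.length ≤ 3 * D' := by
  obtain ⟨x₀, C, hC, he₁, he₂⟩ := h
  obtain ⟨a, b⟩ := e1
  have hG : G.HasShortCommonCycles D' := hD
  have hab : G.Adj a b := C.adj_of_mem_edges he₁
  obtain ⟨c, hce₂, hca⟩ := exists_mem_ne_of_mem_edgeSet (C.edges_subset_edgeSet he₂) a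
  obtain ⟨_, A, hA, haA, he₂A, hAlen⟩ :=
    hG.exists_isCycle_mem_support_mem_edges hC (C.fst_mem_support_of_mem_edges he₁) he₂
  obtain ⟨_, B, hB, hbB, hcB, hBlen⟩ :=
    hD b c ⟨x₀, C, hC, C.snd_mem_support_of_mem_edges he₁, mem_support_of_mem_edges he₂ hce₂⟩
  obtain ⟨T, hT, haT, hTlen⟩ := hB.exists_isPath_notMem_support hbB hcB hab.ne hca.symm
  obtain ⟨z, D, hDc, he₁D, he₂D, hlen⟩ :=
    hA.exists_isCycle_mem_edges_of_ear haA hab hT (mem_support_of_mem_edges he₂A hce₂) haT he₂A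
  exact ⟨z, D, hDc, he₁D, he₂D, by omega⟩
end

section
/- Let (a_1, ..., a_m) be the DFS sequence of p. If a_i = a_j = v for indices i ≤ j, then for every k with i ≤ k ≤ j, the vertex a_k lies in the subtree of v. -/
open Function

/-- The children of `v`, listed in increasing order. -/
def childList {V : Type} [Fintype V] [LinearOrder V] (p : V → V) (v : V) : List V :=
  (Finset.univ.filter (fun u => p u = v ∧ u ≠ v)).sort (· ≤ ·)

/-- DFS sequence of the subtree of `v`, with recursion fuel. -/
def dfsAux {V : Type} [Fintype V] [LinearOrder V] (p : V → V) : ℕ → V → List V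
  | 0, v => [v]
  | n + 1, v =>
      if childList p v = [] then [v]
      else v :: ((childList p v).map (fun c => dfsAux p n c ++ [v])).flatten

/-- The DFS sequence of the rooted tree `p` with root `r`. Fuel `Fintype.card V`
suffices since the depth of every vertex is less than `Fintype.card V`. -/
def dfsSeq {V : Type} [Fintype V] [LinearOrder V] (p : V → V) (r : V) : List V :=
  dfsAux p (Fintype.card V) r

/-!
Unfolding the definition, the DFS sequence of `u` is `u` followed by one block `DFS(c) ++ [u]`
for each child `c`. If `v` is an ancestor of `u`, the whole sequence lies in the subtree of `v`.
Otherwise a segment running from `v` to `v` cannot start at the leading `u`, and it cannot stretch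
over two blocks: `v` would then lie in the subtrees of two distinct children, and these are
disjoint because the only cycles of `p` are fixed points. So the segment lies inside one
`DFS(c)`, and induction on the fuel applies.
-/

section Ancestor

variable {V : Type} (p : V → V)

theorem isAncestor_refl (u : V) : IsAncestor p u u := ⟨0, rfl⟩

variable {p}

theorem IsAncestor.trans {u v w : V} (huv : IsAncestor p u v) (hvw : IsAncestor p v w) :
    IsAncestor p u w := by
  obtain ⟨a, rfl⟩ := huv
  obtain ⟨b, rfl⟩ := hvw
  exact ⟨a + b, iterate_add_apply p a b w⟩

theorem isAncestor_or_isAncestor {u v x : V} (hu : IsAncestor p u x) (hv : IsAncestor p v x) :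
    IsAncestor p u v ∨ IsAncestor p v u := by
  obtain ⟨a, rfl⟩ := hu
  obtain ⟨b, rfl⟩ := hv
  rcases le_total a b with hab | hab
  · exact Or.inr ⟨b - a, by rw [← iterate_add_apply, Nat.sub_add_cancel hab]⟩
  · exact Or.inl ⟨a - b, by rw [← iterate_add_apply, Nat.sub_add_cancel hab]⟩

theorem not_isAncestor_parent (hstab : ∀ v : V, ∃ i : ℕ, p^[i + 1] v = p^[i] v) {u c : V}
    (hc : p c = u) (hne : c ≠ u) : ¬ IsAncestor p c u := by
  rintro ⟨m, hm⟩
  have hper : IsPeriodicPt p (m + 1) u := by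
    rw [IsPeriodicPt, IsFixedPt, iterate_succ_apply', hm, hc]
  obtain ⟨i, hi⟩ := hstab u
  have hfix : IsFixedPt p (p^[i] u) := by
    rw [IsFixedPt, ← iterate_succ_apply' p i]
    exact hi
  -- `u` and `p^[i] u` lie on the same cycle, which is therefore a fixed point.
  have hperiod : minimalPeriod p u = 1 := by
    rw [← minimalPeriod_apply_iterate (mk_mem_periodicPts m.succ_pos hper) i]
    exact minimalPeriod_eq_one_iff_isFixedPt.mpr hfix
  rw [(minimalPeriod_eq_one_iff_isFixedPt.mp hperiod).iterate m] at hm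
  exact hne hm.symm

theorem eq_of_isAncestor_of_isAncestor (hstab : ∀ v : V, ∃ i : ℕ, p^[i + 1] v = p^[i] v)
    {u c₁ c₂ x : V} (hc₁ : p c₁ = u) (hne₁ : c₁ ≠ u) (hc₂ : p c₂ = u) (hne₂ : c₂ ≠ u)
    (h₁ : IsAncestor p c₁ x) (h₂ : IsAncestor p c₂ x) : c₁ = c₂ := by
  have key : ∀ {c d : V}, p c = u → c ≠ u → p d = u → IsAncestor p c d → c = d := by
    rintro c d hc hne hd ⟨_ | m, hm⟩
    · exact hm.symm
    · rw [iterate_succ_apply, hd] at hm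
      exact absurd ⟨m, hm⟩ (not_isAncestor_parent hstab hc hne)
  rcases isAncestor_or_isAncestor h₁ h₂ with h | h
  · exact key hc₁ hne₁ hc₂ h
  · exact (key hc₂ hne₂ hc₁ h).symm

end Ancestor

namespace List

theorem infix_flatten_or {α : Type*} {s : List α} (hs : s ≠ []) :
    ∀ {B : List (List α)}, s <:+: B.flatten →
      (∃ b ∈ B, s <:+: b) ∨ ∃ b₁ b₂, [b₁, b₂] <+ B ∧ s.head hs ∈ b₁ ∧ s.getLast hs ∈ b₂
  | [], h => absurd (infix_nil.mp h) hs
  | b :: B, h => by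
    rw [flatten_cons, infix_append_iff_ne_nil] at h
    rcases h with h | h | ⟨s₁, s₂, hs₁, hs₂, rfl, h₁, h₂⟩
    · exact Or.inl ⟨b, mem_cons_self, h⟩
    · rcases infix_flatten_or hs h with ⟨b', hb', h'⟩ | ⟨b₁, b₂, hB, h₁, h₂⟩
      · exact Or.inl ⟨b', mem_cons_of_mem b hb', h'⟩
      · exact Or.inr ⟨b₁, b₂, hB.cons b, h₁, h₂⟩
    · obtain ⟨b', hb', hlast⟩ := mem_flatten.mp (h₂.subset (getLast_mem hs₂))
      refine Or.inr ⟨b, b', cons_sublist_cons.mpr (singleton_sublist.mpr hb'), ?_, ?_⟩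
      · rw [head_append_of_ne_nil hs₁]
        exact h₁.subset (head_mem hs₁)
      · rwa [getLast_append_of_ne_nil _ hs₂]

theorem exists_infix_of_le_of_le {α : Type*} (l : List α) {i k j : ℕ} (hik : i ≤ k)
    (hkj : k ≤ j) (hj : j < l.length) :
    ∃ s, s <:+: l ∧ s.head? = l[i]? ∧ s.getLast? = l[j]? ∧ l[k] ∈ s := by
  refine ⟨(l.take (j + 1)).drop i, (drop_suffix _ _).isInfix.trans (take_prefix _ _).isInfix,
    by simp [show i < j + 1 by omega], ?_, ?_⟩
  · simp [getLast?_drop, getLast?_take, getElem?_eq_getElem hj]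
    omega
  · refine mem_iff_getElem.mpr ⟨k - i, by simp; omega, ?_⟩
    simp only [getElem_drop, getElem_take]
    congr 1
    omega

end List

section Dfs

variable {V : Type} [Fintype V] [LinearOrder V] {p : V → V}

@[simp]
theorem mem_childList {u c : V} : c ∈ childList p u ↔ p c = u ∧ c ≠ u := by
  simp [childList]

theorem isAncestor_of_mem_dfsAux : ∀ {n : ℕ} {u x : V}, x ∈ dfsAux p n u → IsAncestor p u x
  | 0, u, x, hx => by
    rw [dfsAux, List.mem_singleton] at hx
    exact hx ▸ isAncestor_refl p u
  | n + 1, u, x, hx => by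
    rw [dfsAux] at hx
    split_ifs at hx
    · rw [List.mem_singleton] at hx
      exact hx ▸ isAncestor_refl p u
    · simp only [List.mem_cons, List.mem_flatten, List.mem_map] at hx
      rcases hx with rfl | ⟨_, ⟨c, hc, rfl⟩, hx⟩
      · exact isAncestor_refl p x
      rcases List.mem_append.mp hx with hx | hx
      · exact IsAncestor.trans ⟨1, (mem_childList.mp hc).1⟩ (isAncestor_of_mem_dfsAux hx)
      · exact List.mem_singleton.mp hx ▸ isAncestor_refl p u

theorem not_mem_dfsAux_of_sublist_childList
    (hstab : ∀ v : V, ∃ i : ℕ, p^[i + 1] v = p^[i] v) {n : ℕ} {u c₁ c₂ x : V}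
    (hl : [c₁, c₂].Sublist (childList p u)) (h₁ : x ∈ dfsAux p n c₁) : x ∉ dfsAux p n c₂ := by
  intro h₂
  have hne : c₁ ≠ c₂ := by simpa using (Finset.sort_nodup _ _).sublist hl
  have hc₁ := mem_childList.mp (hl.subset (by simp : c₁ ∈ [c₁, c₂]))
  have hc₂ := mem_childList.mp (hl.subset (by simp : c₂ ∈ [c₁, c₂]))
  exact hne (eq_of_isAncestor_of_isAncestor hstab hc₁.1 hc₁.2 hc₂.1 hc₂.2
    (isAncestor_of_mem_dfsAux h₁) (isAncestor_of_mem_dfsAux h₂))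

theorem isAncestor_of_infix_dfsAux (hstab : ∀ v : V, ∃ i : ℕ, p^[i + 1] v = p^[i] v) {v : V}
    (n : ℕ) : ∀ {u : V} {s : List V}, s <:+: dfsAux p n u → s.head? = some v →
      s.getLast? = some v → ∀ x ∈ s, IsAncestor p v x := by
  induction n with
  | zero =>
    intro u s hs hhead _ x hx
    rw [dfsAux] at hs
    rw [List.mem_singleton.mp (hs.subset hx),
      ← List.mem_singleton.mp (hs.subset (List.mem_of_mem_head? hhead))]
    exact isAncestor_refl p v
  | succ n ih =>
    intro u s hs hhead hlast
    have hne : s ≠ [] := by rintro rfl; simp at hhead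
    by_cases hvu : IsAncestor p v u
    · exact fun x hx => hvu.trans (isAncestor_of_mem_dfsAux (hs.subset hx))
    have hv : v ≠ u := fun h => hvu (h ▸ isAncestor_refl p v)
    rw [dfsAux] at hs
    split_ifs at hs
    · exact absurd (List.mem_singleton.mp (hs.subset (List.mem_of_mem_head? hhead))) hv
    rcases List.infix_cons_iff.mp hs with hpre | hs
    · obtain ⟨t, rfl, -⟩ := (List.prefix_cons_iff.mp hpre).resolve_left hne
      exact absurd (Option.some.inj hhead).symm hv
    rcases List.infix_flatten_or hne hs with ⟨b, hb, hsb⟩ | ⟨b₁, b₂, hB, h₁, h₂⟩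
    · obtain ⟨c, -, rfl⟩ := List.mem_map.mp hb
      rcases List.infix_concat_iff.mp hsb with hsuf | hsb
      · obtain ⟨t, rfl, -⟩ := (List.suffix_concat_iff.mp hsuf).resolve_left hne
        simp only [List.getLast?_append, List.getLast?_singleton, Option.some_or,
          Option.some.injEq] at hlast
        exact absurd hlast.symm hv
      · exact ih hsb hhead hlast
    · obtain ⟨l, hl, hmap⟩ := List.sublist_map_iff.mp hB
      rcases l with _ | ⟨c₁, _ | ⟨c₂, _ | _⟩⟩ <;> simp only [List.map_cons, List.map_nil,
        List.cons.injEq, reduceCtorEq, and_false, and_true] at hmap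
      obtain ⟨rfl, rfl⟩ := hmap
      rw [(List.head_eq_iff_head?_eq_some hne).mpr hhead] at h₁
      rw [(List.getLast_eq_iff_getLast?_eq_some hne).mpr hlast] at h₂
      have hnot : v ∉ [u] := by simpa using hv
      exact absurd ((List.mem_append.mp h₂).resolve_right hnot)
        (not_mem_dfsAux_of_sublist_childList hstab hl ((List.mem_append.mp h₁).resolve_right hnot))

end Dfs

theorem stmt12_general {V : Type} [Fintype V] [LinearOrder V]
    (p : V → V) (r : V)
    (hstab : ∀ v : V, ∃ i : ℕ, p^[i + 1] v = p^[i] v)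
    (A : List V) (hA : A = dfsSeq p r)
    (v : V) (i j k : ℕ)
    (hi : i < A.length) (hj : j < A.length) (hk : k < A.length)
    (hvi : A[i]'hi = v) (hvj : A[j]'hj = v)
    (hik : i ≤ k) (hkj : k ≤ j) :
    IsAncestor p v (A[k]'hk) := by
  obtain ⟨s, hs, hhead, hlast, hmem⟩ := A.exists_infix_of_le_of_le hik hkj hj
  rw [List.getElem?_eq_getElem hi, hvi] at hhead
  rw [List.getElem?_eq_getElem hj, hvj] at hlast
  exact isAncestor_of_infix_dfsAux hstab _ (hA ▸ hs) hhead hlast _ hmem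

theorem stmt12 {V : Type} [Fintype V] [LinearOrder V]
    (p : V → V) (r : V)
    (hstab : ∀ v : V, ∃ i : ℕ, p^[i + 1] v = p^[i] v)
    (hr : p r = r) (hroot : ∀ v : V, p v = v → v = r)
    (A : List V) (hA : A = dfsSeq p r)
    (v : V) (i j k : ℕ)
    (hi : i < A.length) (hj : j < A.length) (hk : k < A.length)
    (hvi : A[i]'hi = v) (hvj : A[j]'hj = v)
    (hik : i ≤ k) (hkj : k ≤ j) :
    IsAncestor p v (A[k]'hk) :=
  stmt12_general p r hstab A hA v i j k hi hj hk hvi hvj hik hkj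
end

section
/- Let w be the LCA of (u, v), let u' be an ancestor of u and v' an ancestor of v, and suppose dep(w) < dep(u') and dep(w) < dep(v'). Then the LCA of (u', v') is also w. -/
open Function

lemma dep_apply_le {V : Type} (p : V → V) {x : V} (hx : ∃ i : ℕ, p^[i + 1] x = p^[i] x) :
    dep p (p x) ≤ dep p x := by
  have hfix : p^[dep p x + 1] x = p^[dep p x] x := Nat.sInf_mem hx
  -- `p^[dep p x] x` is a fixed point of `p`, so `p x` stabilises after at most as many steps.
  apply Nat.sInf_le
  change p^[dep p x + 1] (p x) = p^[dep p x] (p x)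
  rw [← iterate_succ_apply, ← iterate_succ_apply, iterate_succ_apply', hfix,
    ← iterate_succ_apply' p _ x, hfix]

lemma IsAncestor.dep_le_s16 {V : Type} {p : V → V} (hstab : ∀ v : V, ∃ i : ℕ, p^[i + 1] v = p^[i] v)
    {a b : V} (h : IsAncestor p a b) : dep p a ≤ dep p b := by
  obtain ⟨k, rfl⟩ := h
  induction k with
  | zero => rfl
  | succ k ih => exact (iterate_succ_apply' p k b ▸ dep_apply_le p (hstab _)).trans ih

lemma IsAncestor.trans_s16 {V : Type} {p : V → V} {a b c : V}
    (hab : IsAncestor p a b) (hbc : IsAncestor p b c) : IsAncestor p a c := by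
  obtain ⟨j, rfl⟩ := hab
  obtain ⟨i, rfl⟩ := hbc
  exact ⟨j + i, iterate_add_apply p j i c⟩

lemma IsAncestor.total {V : Type} {p : V → V} {a b u : V}
    (ha : IsAncestor p a u) (hb : IsAncestor p b u) :
    IsAncestor p a b ∨ IsAncestor p b a := by
  obtain ⟨i, rfl⟩ := ha
  obtain ⟨j, rfl⟩ := hb
  rcases le_total j i with h | h
  · exact Or.inl ⟨i - j, by rw [← iterate_add_apply, Nat.sub_add_cancel h]⟩
  · exact Or.inr ⟨j - i, by rw [← iterate_add_apply, Nat.sub_add_cancel h]⟩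

lemma IsAncestor.of_dep_lt {V : Type} {p : V → V}
    (hstab : ∀ v : V, ∃ i : ℕ, p^[i + 1] v = p^[i] v) {a b u : V}
    (ha : IsAncestor p a u) (hb : IsAncestor p b u) (hdep : dep p a < dep p b) :
    IsAncestor p a b :=
  (ha.total hb).resolve_right fun hba => (hba.dep_le_s16 hstab).not_gt hdep

theorem stmt16_general {V : Type}
    (p : V → V)
    (hstab : ∀ v : V, ∃ i : ℕ, p^[i + 1] v = p^[i] v)
    (u v w u' v' : V) (hlca : IsLCA p u v w)
    (hu' : IsAncestor p u' u) (hv' : IsAncestor p v' v)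
    (hdu : dep p w < dep p u') (hdv : dep p w < dep p v') :
    IsLCA p u' v' w := by
  obtain ⟨hwu, hwv, hmax⟩ := hlca
  exact ⟨hwu.of_dep_lt hstab hu' hdu, hwv.of_dep_lt hstab hv' hdv,
    fun x hxu' hxv' => hmax x (hxu'.trans_s16 hu') (hxv'.trans_s16 hv')⟩

theorem stmt16 {V : Type} [Fintype V] [DecidableEq V]
    (p : V → V) (r : V)
    (hstab : ∀ v : V, ∃ i : ℕ, p^[i + 1] v = p^[i] v)
    (hr : p r = r) (hroot : ∀ v : V, p v = v → v = r)
    (u v w u' v' : V) (hlca : IsLCA p u v w)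
    (hu' : IsAncestor p u' u) (hv' : IsAncestor p v' v)
    (hdu : dep p w < dep p u') (hdv : dep p w < dep p v') :
    IsLCA p u' v' w :=
  stmt16_general p hstab u v w u' v' hlca hu' hv' hdu hdv
end
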